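/- arXiv:1311.1972 — 4 statements merged into one kernel-verified Lean document; each statement's English description precedes it below -/
import Mathlib

section
/- For every x ∈ ℝ³ and every r > 0, the Lebesgue measure of the gauge ball B(x,r) equals (π²/2)·r⁴. -/
noncomputable section

open MeasureTheory

/-- The underlying space of the Heisenberg group: `ℝ³`. -/
abbrev H3 : Type := ℝ × ℝ × ℝ

/-- The Heisenberg group law `(p,q,r)∗(p',q',r') = (p+p', q+q', r+r'+2(qp'−pq'))`. -/
def Hmul (x y : H3) : H3 :=
  (x.1 + y.1, x.2.1 + y.2.1, x.2.2 + y.2.2 + 2 * (x.2.1 * y.1 - x.1 * y.2.1))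

/-- The inverse for the Heisenberg group law. -/
def Hinv (x : H3) : H3 := (-x.1, -x.2.1, -x.2.2)

/-- The homogeneous (gauge) norm `‖(p,q,r)‖ = ((p²+q²)²+r²)^(1/4)`. -/
def Hnorm (x : H3) : ℝ := ((x.1 ^ 2 + x.2.1 ^ 2) ^ 2 + x.2.2 ^ 2) ^ ((1 : ℝ) / 4)

/-- The gauge distance `δ(x,y) = ‖x⁻¹∗y‖`. -/
def Hdist (x y : H3) : ℝ := Hnorm (Hmul (Hinv x) y)

/-- The gauge ball `B(x,r)`. -/
def Hball (x : H3) (r : ℝ) : Set H3 := {y | Hdist x y < r}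

/-- The dilation `λ∘(p,q,r) = (λp, λq, λ²r)`. -/
def Hdil (l : ℝ) (x : H3) : H3 := (l * x.1, l * x.2.1, l ^ 2 * x.2.2)

/-- A lattice point of `ℤ³` seen inside `ℝ³`. -/
def latticePt (k : ℤ × ℤ × ℤ) : H3 := ((k.1 : ℝ), (k.2.1 : ℝ), (k.2.2 : ℝ))

/-- The dyadic point `x_{j,k} = 2^{−j}∘k`. -/
def xjk (j : ℤ) (k : ℤ × ℤ × ℤ) : H3 := Hdil ((2 : ℝ) ^ (-j)) (latticePt k)

/-
Left translations of `ℍ` are skew products of translations (over each point `(p, q)` they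
translate the `r`-line), hence preserve Lebesgue measure, and it suffices to treat balls centred
at `0`. The slice of `B(0, r)` at height `t` is the disc `p² + q² < √(r⁴ - t²)`, of area
`π √(r⁴ - t²)`. By Fubini once more, `∫ 2 √(s - t²) dt` is the area `π s` of the disc of
radius `√s`, so `|B(0, r)| = (π / 2) · π r⁴`.
-/

open Real Set

lemma volume_setOf_sq_lt (b : ℝ) : volume {t : ℝ | t ^ 2 < b} = ENNReal.ofReal (2 * √b) := by
  have : {t : ℝ | t ^ 2 < b} = Metric.ball 0 √b := by
    ext t
    rw [mem_ofPred_eq, Metric.mem_ball, dist_zero_right, Real.norm_eq_abs,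
      lt_sqrt (abs_nonneg t), sq_abs]
  rw [this, Real.volume_ball]

lemma volume_setOf_sq_add_sq_lt (s : ℝ) :
    volume {z : ℝ × ℝ | z.1 ^ 2 + z.2 ^ 2 < s} = ENNReal.ofReal (π * s) := by
  have : {z : ℝ × ℝ | z.1 ^ 2 + z.2 ^ 2 < s} =
      Complex.measurableEquivRealProd.symm ⁻¹' Metric.ball 0 √s := by
    ext z
    rw [mem_preimage, mem_ball_zero_iff, lt_sqrt (norm_nonneg _), Complex.sq_norm,
      Complex.normSq_apply]
    simp only [sq]
    rfl
  rw [this, Complex.volume_preserving_equiv_real_prod.symm.measure_preimage_equiv,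
    Complex.volume_ball, ← ENNReal.ofReal_pow (sqrt_nonneg s), sq_sqrt', ENNReal.ofReal_max,
    ENNReal.ofReal_zero, max_eq_left zero_le, ENNReal.ofReal_mul pi_pos.le, mul_comm,
    ← NNReal.coe_real_pi, ENNReal.ofReal_coe_nnreal]

lemma lintegral_two_mul_sqrt_sub_sq (s : ℝ) :
    ∫⁻ t, ENNReal.ofReal (2 * √(s - t ^ 2)) = ENNReal.ofReal (π * s) := by
  have hs : MeasurableSet {z : ℝ × ℝ | z.1 ^ 2 + z.2 ^ 2 < s} :=
    measurableSet_lt (by fun_prop) (by fun_prop)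
  rw [← volume_setOf_sq_add_sq_lt, Measure.volume_eq_prod, Measure.prod_apply hs]
  refine lintegral_congr fun t => ?_
  rw [← volume_setOf_sq_lt]
  congr 1
  ext u
  simp only [mem_preimage, mem_ofPred_eq]
  constructor <;> intro h <;> linarith

lemma volume_setOf_sq_add_sq_sq_add_sq_lt (s : ℝ) :
    volume {z : ℝ × ℝ × ℝ | (z.1 ^ 2 + z.2.1 ^ 2) ^ 2 + z.2.2 ^ 2 < s} =
      ENNReal.ofReal (π ^ 2 / 2 * s) := by
  have hs : MeasurableSet {w : (ℝ × ℝ) × ℝ | (w.1.1 ^ 2 + w.1.2 ^ 2) ^ 2 + w.2 ^ 2 < s} :=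
    measurableSet_lt (by fun_prop) (by fun_prop)
  rw [← volume_preserving_prodAssoc.measure_preimage_equiv]
  change volume {w : (ℝ × ℝ) × ℝ | (w.1.1 ^ 2 + w.1.2 ^ 2) ^ 2 + w.2 ^ 2 < s} = _
  rw [Measure.volume_eq_prod, Measure.prod_apply_symm hs]
  have slice : ∀ t : ℝ, volume ((fun z => (z, t)) ⁻¹'
      {w : (ℝ × ℝ) × ℝ | (w.1.1 ^ 2 + w.1.2 ^ 2) ^ 2 + w.2 ^ 2 < s}) =
      ENNReal.ofReal (π / 2) * ENNReal.ofReal (2 * √(s - t ^ 2)) := by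
    intro t
    have fiber : (fun z => (z, t)) ⁻¹'
        {w : (ℝ × ℝ) × ℝ | (w.1.1 ^ 2 + w.1.2 ^ 2) ^ 2 + w.2 ^ 2 < s} =
        {z : ℝ × ℝ | z.1 ^ 2 + z.2 ^ 2 < √(s - t ^ 2)} := by
      ext z
      simp only [mem_preimage, mem_ofPred_eq]
      rw [lt_sqrt (by positivity)]
      constructor <;> intro h <;> linarith
    rw [fiber, volume_setOf_sq_add_sq_lt, ← ENNReal.ofReal_mul (by positivity)]
    ring_nf
  simp_rw [slice]
  rw [lintegral_const_mul _ (by fun_prop), lintegral_two_mul_sqrt_sub_sq,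
    ← ENNReal.ofReal_mul (by positivity)]
  ring_nf

lemma Hnorm_lt_iff {r : ℝ} (hr : 0 ≤ r) (z : H3) :
    Hnorm z < r ↔ (z.1 ^ 2 + z.2.1 ^ 2) ^ 2 + z.2.2 ^ 2 < r ^ 4 := by
  rw [Hnorm, one_div, Real.rpow_inv_lt_iff_of_pos (by positivity) hr four_pos]
  norm_cast

lemma measurePreserving_Hmul (x : H3) : MeasurePreserving (Hmul x) := by
  refine (measurePreserving_add_left volume x.1).skew_product
    (g := fun (p : ℝ) (w : ℝ × ℝ) => (x.2.1 + w.1, x.2.2 + w.2 + 2 * (x.2.1 * p - x.1 * w.1)))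
    (by fun_prop) (ae_of_all _ fun p => ?_)
  refine ((measurePreserving_add_left volume x.2.1).skew_product
    (g := fun q t : ℝ => x.2.2 + t + 2 * (x.2.1 * p - x.1 * q))
    (by fun_prop) (ae_of_all _ fun q => ?_)).map_eq
  exact ((measurePreserving_add_right volume _).comp (measurePreserving_add_left volume _)).map_eq

/-- The Lebesgue measure of the gauge ball `B(x,r)` equals `(π²/2)·r⁴`. -/
theorem heisenberg_ball_volume :
    ∀ x : H3, ∀ r : ℝ, 0 < r →
      (volume : Measure H3) (Hball x r) = ENNReal.ofReal (Real.pi ^ 2 / 2 * r ^ 4) := by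
  intro x r hr
  have hball : Hball x r =
      Hmul (Hinv x) ⁻¹' {z | (z.1 ^ 2 + z.2.1 ^ 2) ^ 2 + z.2.2 ^ 2 < r ^ 4} := by
    ext y
    exact Hnorm_lt_iff hr.le _
  rw [hball, (measurePreserving_Hmul _).measure_preimage
    (measurableSet_lt (by fun_prop) (by fun_prop)).nullMeasurableSet,
    volume_setOf_sq_add_sq_sq_add_sq_lt]
end
end

section
/- For every j ∈ ℕ and every k ∈ ℤ³, the set of parameters k' ∈ ℤ³ such that B(x_{j,k∗k'}, 2^{−j}) ∩ B(x_{j,k}, 2^{−j}) ≠ ∅ is exactly the 43-element set {k' = (k₁',k₂',k₃') ∈ ℤ³ : (k₁' = k₂' = 0 and |k₃'| ≤ 1) or (1 ≤ k₁'² + k₂'² ≤ 2 and |k₃'| ≤ 2)}. -/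
noncomputable section

open MeasureTheory

/-- The Heisenberg product of two lattice points of `ℤ³`. -/
def Zmul (k k' : ℤ × ℤ × ℤ) : ℤ × ℤ × ℤ :=
  (k.1 + k'.1, k.2.1 + k'.2.1, k.2.2 + k'.2.2 + 2 * (k.2.1 * k'.1 - k.1 * k'.2.1))

namespace HeisAux

def N4 (x : H3) : ℝ := (x.1 ^ 2 + x.2.1 ^ 2) ^ 2 + x.2.2 ^ 2

lemma N4_nonneg (x : H3) : 0 ≤ N4 x := by unfold N4; positivity

lemma H3ext {x y : H3} (h1 : x.1 = y.1) (h2 : x.2.1 = y.2.1) (h3 : x.2.2 = y.2.2) : x = y := by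
  obtain ⟨a, b, c⟩ := x; obtain ⟨d, e, f⟩ := y; simp_all

lemma Hnorm_lt_iff {x : H3} {r : ℝ} (hr : 0 < r) : Hnorm x < r ↔ N4 x < r ^ 4 := by
  have h0 := N4_nonneg x
  have hne : Hnorm x = (N4 x) ^ ((1:ℝ)/4) := rfl
  have hid : (Hnorm x) ^ (4:ℕ) = N4 x := by
    rw [hne, ← Real.rpow_natCast ((N4 x) ^ ((1:ℝ)/4)) 4, ← Real.rpow_mul h0]
    norm_num
  constructor
  · intro h
    have := pow_lt_pow_left₀ h (by rw [hne]; exact Real.rpow_nonneg h0 _) (n := 4) (by norm_num)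
    rwa [hid] at this
  · intro h
    have h4 : (0:ℝ) ≤ Hnorm x := by rw [hne]; exact Real.rpow_nonneg h0 _
    by_contra hc
    push_neg at hc
    have := pow_le_pow_left₀ hr.le hc 4
    rw [hid] at this
    exact absurd h (not_lt.mpr this)

lemma hmul_mid (x y z : H3) : Hmul (Hmul x y) (Hmul (Hinv y) z) = Hmul x z := by
  apply H3ext <;> simp only [Hmul, Hinv] <;> ring

lemma hmul_cancel_left (x w : H3) : Hmul (Hinv x) (Hmul x w) = w := by
  apply H3ext <;> simp only [Hmul, Hinv] <;> ring

lemma hinv_swap (x y : H3) : Hinv (Hmul (Hinv x) y) = Hmul (Hinv y) x := by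
  apply H3ext <;> simp only [Hmul, Hinv] <;> ring

lemma hinv_mul_left (u v : H3) : Hmul (Hinv (Hmul u v)) u = Hinv v := by
  apply H3ext <;> simp only [Hmul, Hinv] <;> ring

lemma N4_hinv (x : H3) : N4 (Hinv x) = N4 x := by simp only [N4, Hinv]; ring

lemma N4_dil (l : ℝ) (x : H3) : N4 (Hdil l x) = l ^ 4 * N4 x := by simp only [N4, Hdil]; ring

lemma dil_mul (l : ℝ) (x y : H3) : Hdil l (Hmul x y) = Hmul (Hdil l x) (Hdil l y) := by
  apply H3ext <;> simp only [Hmul, Hdil] <;> ring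

lemma dil_dil (l m : ℝ) (x : H3) : Hdil l (Hdil m x) = Hdil (l * m) x := by
  apply H3ext <;> simp only [Hdil] <;> ring

lemma dil_one (x : H3) : Hdil 1 x = x := by apply H3ext <;> simp only [Hdil] <;> ring

lemma hinv_dil (l : ℝ) (x : H3) : Hinv (Hdil l x) = Hdil l (Hinv x) := by
  apply H3ext <;> simp only [Hdil, Hinv] <;> ring

end HeisAux

namespace HeisAux

lemma mem_Hball {a y : H3} {r : ℝ} : y ∈ Hball a r ↔ Hnorm (Hmul (Hinv a) y) < r := Iff.rfl

lemma inter_iff (a b c : H3) (r : ℝ) (hr : 0 < r) (hbase : Hmul (Hinv a) b = Hdil r c) :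
    (Hball a r ∩ Hball b r).Nonempty ↔
      ∃ u v : H3, N4 u < 1 ∧ N4 v < 1 ∧ Hmul u v = c := by
  have hr4 : (0:ℝ) < r ^ 4 := by positivity
  have hri : r⁻¹ * r = 1 := inv_mul_cancel₀ hr.ne'
  constructor
  · rintro ⟨y, hy1, hy2⟩
    rw [mem_Hball, Hnorm_lt_iff hr] at hy1 hy2
    refine ⟨Hdil r⁻¹ (Hmul (Hinv a) y), Hdil r⁻¹ (Hmul (Hinv y) b), ?_, ?_, ?_⟩
    · rw [N4_dil]
      calc r⁻¹ ^ 4 * N4 (Hmul (Hinv a) y) < r⁻¹ ^ 4 * r ^ 4 := by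
            apply mul_lt_mul_of_pos_left hy1 (by positivity)
        _ = 1 := by field_simp
    · rw [N4_dil, ← N4_hinv (Hmul (Hinv y) b), hinv_swap]
      calc r⁻¹ ^ 4 * N4 (Hmul (Hinv b) y) < r⁻¹ ^ 4 * r ^ 4 := by
            apply mul_lt_mul_of_pos_left hy2 (by positivity)
        _ = 1 := by field_simp
    · rw [← dil_mul, hmul_mid, hbase, dil_dil, hri, dil_one]
  · rintro ⟨u, v, hu, hv, huv⟩
    refine ⟨Hmul a (Hdil r u), ?_, ?_⟩
    · rw [mem_Hball, Hnorm_lt_iff hr, hmul_cancel_left, N4_dil]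
      calc r ^ 4 * N4 u < r ^ 4 * 1 := by apply mul_lt_mul_of_pos_left hu hr4
        _ = r ^ 4 := mul_one _
    · rw [mem_Hball, Hnorm_lt_iff hr]
      have hba : Hmul (Hinv b) a = Hdil r (Hinv c) := by
        rw [← hinv_swap, hbase, hinv_dil]
      have hassoc : Hmul (Hinv b) (Hmul a (Hdil r u)) = Hmul (Hmul (Hinv b) a) (Hdil r u) := by
        apply H3ext <;> simp only [Hmul, Hinv] <;> ring
      rw [hassoc, hba, ← dil_mul, N4_dil, ← huv, hinv_mul_left, N4_hinv]
      calc r ^ 4 * N4 v < r ^ 4 * 1 := by apply mul_lt_mul_of_pos_left hv hr4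
        _ = r ^ 4 := mul_one _
end HeisAux

namespace HeisAux

lemma base_eq (j : ℤ) (k k' : ℤ × ℤ × ℤ) :
    Hmul (Hinv (xjk j (Zmul k k'))) (xjk j k)
      = Hdil ((2:ℝ) ^ (-j)) (Hinv (latticePt k')) := by
  apply H3ext <;> simp only [xjk, Zmul, latticePt, Hdil, Hmul, Hinv] <;> push_cast <;> ring

lemma build (A B C t : ℝ)
    (h : ((A^2+B^2)*(1/4+t^2))^2 + ((C + 2*t*(A^2+B^2))/2)^2 < 1) :
    ∃ u v : H3, N4 u < 1 ∧ N4 v < 1 ∧ Hmul u v = (A, B, C) := by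
  refine ⟨(A/2 + t*B, B/2 - t*A, (C + 2*t*(A^2+B^2))/2),
          (A/2 - t*B, B/2 + t*A, (C + 2*t*(A^2+B^2))/2), ?_, ?_, ?_⟩
  · have e : N4 (A/2 + t*B, B/2 - t*A, (C + 2*t*(A^2+B^2))/2)
        = ((A^2+B^2)*(1/4+t^2))^2 + ((C + 2*t*(A^2+B^2))/2)^2 := by
      simp only [N4]; ring
    rw [e]; exact h
  · have e : N4 (A/2 - t*B, B/2 + t*A, (C + 2*t*(A^2+B^2))/2)
        = ((A^2+B^2)*(1/4+t^2))^2 + ((C + 2*t*(A^2+B^2))/2)^2 := by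
      simp only [N4]; ring
    rw [e]; exact h
  · apply H3ext <;> simp only [Hmul] <;> ring

end HeisAux

namespace HeisAux

lemma build' (a b c : ℤ) (t : ℝ)
    (h : (((a^2+b^2 : ℤ):ℝ)*(1/4+t^2))^2 + ((-(c:ℝ) + 2*t*((a^2+b^2 : ℤ):ℝ))/2)^2 < 1) :
    ∃ u v : H3, N4 u < 1 ∧ N4 v < 1 ∧ Hmul u v = Hinv (latticePt (a, b, c)) := by
  have hA : (-(a:ℝ))^2 + (-(b:ℝ))^2 = ((a^2+b^2 : ℤ):ℝ) := by push_cast; ring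
  obtain ⟨u, v, hu, hv, huv⟩ := build (-(a:ℝ)) (-(b:ℝ)) (-(c:ℝ)) t (by rw [hA]; exact h)
  exact ⟨u, v, hu, hv, huv⟩

lemma int_bounds {a : ℤ} (h : a^2 ≤ 3) : a^2 ≤ 1 ∧ -1 ≤ a ∧ a ≤ 1 := by
  have h1 : -1 ≤ a := by nlinarith
  have h2 : a ≤ 1 := by nlinarith
  exact ⟨by nlinarith, h1, h2⟩

set_option maxHeartbeats 1000000 in
lemma char (k' : ℤ × ℤ × ℤ) :
    (∃ u v : H3, N4 u < 1 ∧ N4 v < 1 ∧ Hmul u v = Hinv (latticePt k')) ↔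
      ((k'.1 = 0 ∧ k'.2.1 = 0 ∧ |k'.2.2| ≤ 1) ∨
        (1 ≤ k'.1 ^ 2 + k'.2.1 ^ 2 ∧ k'.1 ^ 2 + k'.2.1 ^ 2 ≤ 2 ∧ |k'.2.2| ≤ 2)) := by
  obtain ⟨a, b, c⟩ := k'
  dsimp only
  constructor
  · rintro ⟨⟨p, q, r⟩, ⟨p', q', r'⟩, hu, hv, heq⟩
    have hu' : (p^2+q^2)^2 + r^2 < 1 := hu
    have hv' : (p'^2+q'^2)^2 + r'^2 < 1 := hv
    have e1 : p + p' = -((a : ℝ)) := congrArg Prod.fst heq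
    have e2 : q + q' = -((b : ℝ)) := congrArg (fun z => z.2.1) heq
    have e3 : r + r' + 2*(q*p' - p*q') = -((c : ℝ)) := congrArg (fun z => z.2.2) heq
    have hp1 : p^2 + q^2 < 1 := by nlinarith [sq_nonneg r, sq_nonneg (p^2+q^2)]
    have hp2 : p'^2 + q'^2 < 1 := by nlinarith [sq_nonneg r', sq_nonneg (p'^2+q'^2)]
    have hr1 : r^2 < 1 := by nlinarith [sq_nonneg (p^2+q^2)]
    have hr2 : r'^2 < 1 := by nlinarith [sq_nonneg (p'^2+q'^2)]
    have ea : (a:ℝ) = -(p + p') := by linarith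
    have eb : (b:ℝ) = -(q + q') := by linarith
    have ec : (c:ℝ) = -(r + r' + 2*(q*p' - p*q')) := by linarith
    have hsR : ((a^2 + b^2 : ℤ) : ℝ) < 4 := by
      push_cast
      rw [ea, eb]
      nlinarith [sq_nonneg (p - p'), sq_nonneg (q - q')]
    have hs4 : a^2 + b^2 < 4 := by exact_mod_cast hsR
    have ha3 : a^2 ≤ 3 := by nlinarith [sq_nonneg b]
    have hb3 : b^2 ≤ 3 := by nlinarith [sq_nonneg a]
    have ha1 := int_bounds ha3
    have hb1 := int_bounds hb3
    have hs2 : a^2 + b^2 ≤ 2 := by linarith [ha1.1, hb1.1]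
    by_cases h0 : a = 0 ∧ b = 0
    · left
      refine ⟨h0.1, h0.2, ?_⟩
      have ep : p' = -p := by rw [h0.1] at ea; push_cast at ea; linarith
      have eq' : q' = -q := by rw [h0.2] at eb; push_cast at eb; linarith
      have e3' : (c:ℝ) = -(r + r') := by rw [ep, eq'] at ec; linear_combination ec
      have hC : ((c:ℝ))^2 < 4 := by rw [e3']; nlinarith [sq_nonneg (r - r')]
      have hC' : c^2 < 4 := by exact_mod_cast hC
      rw [abs_le]; constructor <;> nlinarith
    · right
      have hs1 : 1 ≤ a^2 + b^2 := by
        rcases not_and_or.mp h0 with h | h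
        · rcases lt_or_gt_of_ne h with hlt | hgt
          · nlinarith [sq_nonneg b]
          · nlinarith [sq_nonneg b]
        · rcases lt_or_gt_of_ne h with hlt | hgt
          · nlinarith [sq_nonneg a]
          · nlinarith [sq_nonneg a]
      refine ⟨hs1, hs2, ?_⟩
      have hL : (q*p'-p*q')^2 + (p*p'+q*q')^2 = (p^2+q^2)*(p'^2+q'^2) := by ring
      have hC : ((c:ℝ))^2 < 9 := by
        rw [ec]
        nlinarith [hu', hv', hL, sq_nonneg (r + r' - 2*(q*p' - p*q')),
          sq_nonneg (r - r'), sq_nonneg (p^2+q^2 - p'^2 - q'^2), sq_nonneg (p*p'+q*q'),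
          sq_nonneg (r + r' + 2*(q*p' - p*q'))]
      have hC' : c^2 < 9 := by exact_mod_cast hC
      rw [abs_le]; constructor <;> nlinarith
  · rintro (⟨h1, h2, h3⟩ | ⟨h1, h2, h3⟩)
    · subst h1; subst h2
      rw [abs_le] at h3
      have hc3 : c = -1 ∨ c = 0 ∨ c = 1 := by omega
      rcases hc3 with hc | hc | hc <;> subst hc <;>
        · apply build' _ _ _ 0
          norm_num
    · rw [abs_le] at h3
      have h12 : a^2 + b^2 = 1 ∨ a^2 + b^2 = 2 := by
        rcases eq_or_lt_of_le h2 with h | h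
        · right; exact h
        · left; exact le_antisymm (by linarith [Int.lt_iff_add_one_le.mp h]) h1
      have hc5 : c = -2 ∨ c = -1 ∨ c = 0 ∨ c = 1 ∨ c = 2 := by omega
      rcases h12 with hs | hs <;> rcases hc5 with hc | hc | hc | hc | hc <;>
        · apply build' a b c (3*(c:ℝ)/(8*((a^2+b^2 : ℤ):ℝ)))
          rw [hs, hc]
          norm_num

end HeisAux

namespace HeisAux

lemma count43 :
    ({k' : ℤ × ℤ × ℤ |
      (k'.1 = 0 ∧ k'.2.1 = 0 ∧ |k'.2.2| ≤ 1) ∨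
      (1 ≤ k'.1 ^ 2 + k'.2.1 ^ 2 ∧ k'.1 ^ 2 + k'.2.1 ^ 2 ≤ 2 ∧ |k'.2.2| ≤ 2)}).ncard = 43 := by
  have hset : {k' : ℤ × ℤ × ℤ |
      (k'.1 = 0 ∧ k'.2.1 = 0 ∧ |k'.2.2| ≤ 1) ∨
      (1 ≤ k'.1 ^ 2 + k'.2.1 ^ 2 ∧ k'.1 ^ 2 + k'.2.1 ^ 2 ≤ 2 ∧ |k'.2.2| ≤ 2)}
      = ↑((Finset.Icc (-1:ℤ) 1 ×ˢ Finset.Icc (-1:ℤ) 1 ×ˢ Finset.Icc (-2:ℤ) 2).filter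
          (fun k' => (k'.1 = 0 ∧ k'.2.1 = 0 ∧ |k'.2.2| ≤ 1) ∨
            (1 ≤ k'.1 ^ 2 + k'.2.1 ^ 2 ∧ k'.1 ^ 2 + k'.2.1 ^ 2 ≤ 2 ∧ |k'.2.2| ≤ 2))) := by
    ext ⟨a, b, c⟩
    simp only [Set.mem_setOf_eq, Finset.coe_filter, Finset.mem_product, Finset.mem_Icc]
    constructor
    · intro h
      refine ⟨?_, h⟩
      rcases h with ⟨h1, h2, h3⟩ | ⟨h1, h2, h3⟩
      · rw [abs_le] at h3

        omega
      ·
        rw [abs_le] at h3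
        have ha : a^2 ≤ 3 := by nlinarith [sq_nonneg b]
        have hb : b^2 ≤ 3 := by nlinarith [sq_nonneg a]
        have ha' := int_bounds ha
        have hb' := int_bounds hb
        exact ⟨⟨ha'.2.1, ha'.2.2⟩, ⟨hb'.2.1, hb'.2.2⟩, h3.1, h3.2⟩
    · exact fun h => h.2
  rw [hset, Set.ncard_coe_finset]
  decide

end HeisAux


/-- For every `j ∈ ℕ` and `k ∈ ℤ³`, the parameters `k'` such that
`B(x_{j,k∗k'}, 2^{−j})` meets `B(x_{j,k}, 2^{−j})` form exactly the 43-element set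
described by `(k₁' = k₂' = 0 ∧ |k₃'| ≤ 1) ∨ (1 ≤ k₁'²+k₂'² ≤ 2 ∧ |k₃'| ≤ 2)`. -/
theorem heisenberg_ball_intersections (j : ℕ) (k : ℤ × ℤ × ℤ) :
    {k' : ℤ × ℤ × ℤ |
        (Hball (xjk (j : ℤ) (Zmul k k')) ((2 : ℝ) ^ (-(j : ℤ))) ∩
          Hball (xjk (j : ℤ) k) ((2 : ℝ) ^ (-(j : ℤ)))).Nonempty}
      = {k' : ℤ × ℤ × ℤ |
          (k'.1 = 0 ∧ k'.2.1 = 0 ∧ |k'.2.2| ≤ 1) ∨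
          (1 ≤ k'.1 ^ 2 + k'.2.1 ^ 2 ∧ k'.1 ^ 2 + k'.2.1 ^ 2 ≤ 2 ∧ |k'.2.2| ≤ 2)} ∧
    {k' : ℤ × ℤ × ℤ |
        (Hball (xjk (j : ℤ) (Zmul k k')) ((2 : ℝ) ^ (-(j : ℤ))) ∩
          Hball (xjk (j : ℤ) k) ((2 : ℝ) ^ (-(j : ℤ)))).Nonempty}.ncard = 43 := by
  have hr : (0:ℝ) < (2 : ℝ) ^ (-(j : ℤ)) := by positivity
  have hset : {k' : ℤ × ℤ × ℤ |
        (Hball (xjk (j : ℤ) (Zmul k k')) ((2 : ℝ) ^ (-(j : ℤ))) ∩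
          Hball (xjk (j : ℤ) k) ((2 : ℝ) ^ (-(j : ℤ)))).Nonempty}
      = {k' : ℤ × ℤ × ℤ |
          (k'.1 = 0 ∧ k'.2.1 = 0 ∧ |k'.2.2| ≤ 1) ∨
          (1 ≤ k'.1 ^ 2 + k'.2.1 ^ 2 ∧ k'.1 ^ 2 + k'.2.1 ^ 2 ≤ 2 ∧ |k'.2.2| ≤ 2)} := by
    ext k'
    simp only [Set.mem_setOf_eq]
    rw [HeisAux.inter_iff _ _ (Hinv (latticePt k')) _ hr (HeisAux.base_eq (j : ℤ) k k'),
      HeisAux.char]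
  exact ⟨hset, by rw [hset]; exact HeisAux.count43⟩
end
end

section
/- There exist constants C > 0 and γ₂ > 0 such that for every continuously differentiable function f : ℝ³ → ℝ and all x, y ∈ ℝ³, |f(y) − f(x)| ≤ C·δ(x,y)·sup{ |∇_ℍ f(x∗z)| : z ∈ ℝ³, ‖z‖ ≤ γ₂·δ(x,y) }, where |∇_ℍ f| = ((Xf)² + (Yf)²)^(1/2). -/
/-!
Write `x⁻¹ ∗ y = (a, b, c)` and reach it from the origin by six horizontal segments: along `X`
by `a`, along `Y` by `b`, then once around a commutator loop with sides `α`, `β`,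
`4αβ = -(c + 2ab)`, which supplies the missing vertical coordinate. Each left-translated
segment is a straight line of `ℝ³` with velocity `hX + kY`, so the mean value theorem bounds
the change of `f` along it by its length times `sup |∇_ℍ f|`. The path has length at most
`6 δ(x, y)`, and a product of horizontal elements of total length `ℓ` has `|p| + |q| ≤ ℓ` and
`|r| ≤ ℓ²`, hence gauge norm at most `2ℓ`: the whole path stays in
`x ∗ {‖z‖ ≤ 12 δ(x, y)}`.
-/

noncomputable section

open MeasureTheory

/-- The left-invariant vector field `X = ∂/∂p + 2q ∂/∂r` acting on functions. -/
def XD (f : H3 → ℝ) (x : H3) : ℝ := fderiv ℝ f x (1, 0, 2 * x.2.1)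

/-- The left-invariant vector field `Y = ∂/∂q − 2p ∂/∂r` acting on functions. -/
def YD (f : H3 → ℝ) (x : H3) : ℝ := fderiv ℝ f x (0, 1, -2 * x.1)

lemma Hmul_zero (x : H3) : Hmul x 0 = x := by
  simp [Hmul]

lemma Hmul_assoc (x y z : H3) : Hmul (Hmul x y) z = Hmul x (Hmul y z) := by
  simp only [Hmul, Prod.mk.injEq]
  refine ⟨by ring, by ring, by ring⟩

lemma Hmul_Hinv_mul (x y : H3) : Hmul x (Hmul (Hinv x) y) = y := by
  simp only [Hmul, Hinv]
  ext <;> simp only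
  all_goals ring

lemma Hnorm_nonneg (z : H3) : 0 ≤ Hnorm z := Real.rpow_nonneg (by positivity) _

lemma Hnorm_pow_four (z : H3) : Hnorm z ^ 4 = (z.1 ^ 2 + z.2.1 ^ 2) ^ 2 + z.2.2 ^ 2 := by
  rw [Hnorm, ← Real.rpow_natCast, ← Real.rpow_mul (by positivity)]
  norm_num

lemma Hnorm_le_iff {z : H3} {R : ℝ} (hR : 0 ≤ R) :
    Hnorm z ≤ R ↔ (z.1 ^ 2 + z.2.1 ^ 2) ^ 2 + z.2.2 ^ 2 ≤ R ^ 4 := by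
  rw [← pow_le_pow_iff_left₀ (Hnorm_nonneg z) hR (by norm_num : 4 ≠ 0), Hnorm_pow_four]

lemma abs_fst_le_Hnorm (z : H3) : |z.1| ≤ Hnorm z := by
  rw [← pow_le_pow_iff_left₀ (abs_nonneg _) (Hnorm_nonneg z) (by norm_num : 4 ≠ 0),
    Hnorm_pow_four]
  nlinarith [sq_abs z.1, sq_nonneg z.2.1, sq_nonneg z.2.2, sq_nonneg z.1]

lemma abs_snd_fst_le_Hnorm (z : H3) : |z.2.1| ≤ Hnorm z := by
  rw [← pow_le_pow_iff_left₀ (abs_nonneg _) (Hnorm_nonneg z) (by norm_num : 4 ≠ 0),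
    Hnorm_pow_four]
  nlinarith [sq_abs z.2.1, sq_nonneg z.2.1, sq_nonneg z.2.2, sq_nonneg z.1]

lemma abs_snd_snd_le_Hnorm_sq (z : H3) : |z.2.2| ≤ Hnorm z ^ 2 := by
  rw [← pow_le_pow_iff_left₀ (abs_nonneg _) (by positivity) (by norm_num : 2 ≠ 0),
    ← pow_mul, Hnorm_pow_four, sq_abs]
  nlinarith [sq_nonneg (z.1 ^ 2 + z.2.1 ^ 2)]

lemma continuous_Hnorm : Continuous Hnorm := by
  unfold Hnorm
  fun_prop (disch := norm_num)

lemma isCompact_Hnorm_le (R : ℝ) : IsCompact {z : H3 | Hnorm z ≤ R} := by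
  refine (isCompact_Icc (a := ((-R, -R, -R ^ 2) : H3)) (b := (R, R, R ^ 2))).of_isClosed_subset
    (isClosed_le continuous_Hnorm continuous_const) fun z hz => ?_
  have h₁ := abs_le.mp ((abs_fst_le_Hnorm z).trans hz)
  have h₂ := abs_le.mp ((abs_snd_fst_le_Hnorm z).trans hz)
  have h₃ := abs_le.mp ((abs_snd_snd_le_Hnorm_sq z).trans
    (pow_le_pow_left₀ (Hnorm_nonneg z) hz 2))
  exact ⟨⟨h₁.1, h₂.1, h₃.1⟩, h₁.2, h₂.2, h₃.2⟩

def horizGradNorm (f : H3 → ℝ) (x : H3) : ℝ := Real.sqrt (XD f x ^ 2 + YD f x ^ 2)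

lemma continuous_horizGradNorm {f : H3 → ℝ} (hf : ContDiff ℝ 1 f) :
    Continuous (horizGradNorm f) := by
  have hDf := hf.continuous_fderiv one_ne_zero
  have hX : Continuous (XD f) := hDf.clm_apply (by fun_prop)
  have hY : Continuous (YD f) := hDf.clm_apply (by fun_prop)
  unfold horizGradNorm
  fun_prop

lemma abs_mul_add_mul_le_horizGradNorm (f : H3 → ℝ) (x : H3) (h k : ℝ) :
    |h * XD f x + k * YD f x| ≤ (|h| + |k|) * horizGradNorm f x := by
  have hX : |XD f x| ≤ horizGradNorm f x :=
    Real.abs_le_sqrt (le_add_of_nonneg_right (sq_nonneg _))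
  have hY : |YD f x| ≤ horizGradNorm f x :=
    Real.abs_le_sqrt (le_add_of_nonneg_left (sq_nonneg _))
  calc |h * XD f x + k * YD f x| ≤ |h| * |XD f x| + |k| * |YD f x| := by
        simpa only [abs_mul] using abs_add_le (h * XD f x) (k * YD f x)
    _ ≤ |h| * horizGradNorm f x + |k| * horizGradNorm f x := by gcongr
    _ = (|h| + |k|) * horizGradNorm f x := by ring

lemma Hmul_horizontal_eq_add_smul (u : H3) (h k t : ℝ) :
    Hmul u (t * h, t * k, 0) = u + t • (h, k, 2 * (u.2.1 * h - u.1 * k)) := by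
  simp only [Hmul, Prod.smul_mk, smul_eq_mul]
  ext <;> simp only [Prod.fst_add, Prod.snd_add]
  ring

lemma hasDerivAt_comp_Hmul_horizontal {f : H3 → ℝ} (hf : Differentiable ℝ f) (u : H3)
    (h k t : ℝ) :
    HasDerivAt (fun s : ℝ => f (Hmul u (s * h, s * k, 0)))
      (h * XD f (Hmul u (t * h, t * k, 0)) + k * YD f (Hmul u (t * h, t * k, 0))) t := by
  set v : H3 := (h, k, 2 * (u.2.1 * h - u.1 * k))
  set P := u + t • v
  have hline : HasDerivAt (fun s : ℝ => u + s • v) v t :=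
    ((hasDerivAt_id t).smul_const v).const_add u |>.congr_deriv (one_smul ℝ v)
  have hv : v = h • ((1, 0, 2 * P.2.1) : H3) + k • ((0, 1, -2 * P.1) : H3) := by
    simp only [v, P, Prod.smul_mk, smul_eq_mul, Prod.fst_add, Prod.snd_add, Prod.mk_add_mk]
    ext <;> ring
  simp only [Hmul_horizontal_eq_add_smul, XD, YD]
  refine ((hf P).hasFDerivAt.comp_hasDerivAt t hline).congr_deriv ?_
  conv_lhs => rw [hv]
  simp only [map_add, map_smul, smul_eq_mul]
  rfl

lemma abs_sub_le_of_horizGradNorm_le_segment {f : H3 → ℝ} (hf : Differentiable ℝ f) (u : H3)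
    (h k M : ℝ)
    (hM : ∀ t ∈ Set.Icc (0 : ℝ) 1, horizGradNorm f (Hmul u (t * h, t * k, 0)) ≤ M) :
    |f (Hmul u (h, k, 0)) - f u| ≤ (|h| + |k|) * M := by
  have hderiv := hasDerivAt_comp_Hmul_horizontal hf u h k
  have := norm_image_sub_le_of_norm_deriv_le_segment_01' (C := (|h| + |k|) * M)
    (fun t _ => (hderiv t).hasDerivWithinAt) fun t ht =>
      (abs_mul_add_mul_le_horizGradNorm f _ h k).trans <| by
        gcongr
        exact hM t (Set.Ico_subset_Icc_self ht)
  simpa only [one_mul, zero_mul, Prod.mk_zero_zero, Hmul_zero, Real.norm_eq_abs] using this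

/-- The product of the horizontal elements `(h, k, 0)` listed, the head of the list being the
last factor. -/
def horizWord : List (ℝ × ℝ) → H3
  | [] => 0
  | g :: l => Hmul (horizWord l) (g.1, g.2, 0)

def horizLength (l : List (ℝ × ℝ)) : ℝ := (l.map fun g => |g.1| + |g.2|).sum

@[simp]
lemma horizLength_nil : horizLength [] = 0 := rfl

@[simp]
lemma horizLength_cons (g : ℝ × ℝ) (l : List (ℝ × ℝ)) :
    horizLength (g :: l) = |g.1| + |g.2| + horizLength l := rfl

lemma horizLength_nonneg (l : List (ℝ × ℝ)) : 0 ≤ horizLength l :=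
  List.sum_nonneg fun _ hx => by
    obtain ⟨g, -, rfl⟩ := List.mem_map.mp hx
    positivity

lemma horizWord_coord_bound (l : List (ℝ × ℝ)) :
    |(horizWord l).1| + |(horizWord l).2.1| ≤ horizLength l ∧
      |(horizWord l).2.2| ≤ horizLength l ^ 2 := by
  induction l with
  | nil => simp [horizWord]
  | cons g l ih =>
    obtain ⟨hpq, hr⟩ := ih
    set z := horizWord l
    set ℓ := horizLength l
    have hℓ : 0 ≤ ℓ := horizLength_nonneg l
    have hz₁ := abs_nonneg z.1
    have hz₂ := abs_nonneg z.2.1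
    have hg₁ := abs_nonneg g.1
    have hg₂ := abs_nonneg g.2
    simp only [horizWord, Hmul, horizLength_cons, add_zero]
    refine ⟨?_, ?_⟩
    · linarith [abs_add_le z.1 g.1, abs_add_le z.2.1 g.2]
    · have hcross : |z.2.1 * g.1 - z.1 * g.2| ≤ ℓ * (|g.1| + |g.2|) :=
        calc |z.2.1 * g.1 - z.1 * g.2| ≤ |z.2.1| * |g.1| + |z.1| * |g.2| := by
              simpa only [abs_mul] using abs_sub (z.2.1 * g.1) (z.1 * g.2)
          _ ≤ (|z.1| + |z.2.1|) * (|g.1| + |g.2|) := by nlinarith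
          _ ≤ ℓ * (|g.1| + |g.2|) := by gcongr
      calc |z.2.2 + 2 * (z.2.1 * g.1 - z.1 * g.2)|
          ≤ |z.2.2| + 2 * |z.2.1 * g.1 - z.1 * g.2| := by
            simpa only [abs_mul, abs_two] using abs_add_le z.2.2 (2 * (z.2.1 * g.1 - z.1 * g.2))
        _ ≤ ℓ ^ 2 + 2 * (ℓ * (|g.1| + |g.2|)) := by gcongr
        _ ≤ (|g.1| + |g.2| + ℓ) ^ 2 := by nlinarith

lemma Hnorm_horizWord_le (l : List (ℝ × ℝ)) : Hnorm (horizWord l) ≤ 2 * horizLength l := by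
  obtain ⟨hpq, hr⟩ := horizWord_coord_bound l
  set z := horizWord l
  set ℓ := horizLength l
  have hℓ : 0 ≤ ℓ := horizLength_nonneg l
  have hpq' : z.1 ^ 2 + z.2.1 ^ 2 ≤ ℓ ^ 2 := by
    have := pow_le_pow_left₀ (by positivity) hpq 2
    nlinarith [sq_abs z.1, sq_abs z.2.1, abs_nonneg z.1, abs_nonneg z.2.1]
  have hr' : z.2.2 ^ 2 ≤ (ℓ ^ 2) ^ 2 := by
    simpa only [sq_abs] using pow_le_pow_left₀ (abs_nonneg _) hr 2
  rw [Hnorm_le_iff (by positivity)]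
  nlinarith [pow_le_pow_left₀ (by positivity) hpq' 2]

lemma abs_sub_le_of_horizGradNorm_le_horizWord {f : H3 → ℝ} (hf : Differentiable ℝ f)
    (x : H3) (M : ℝ) (l : List (ℝ × ℝ))
    (hM : ∀ z, Hnorm z ≤ 2 * horizLength l → horizGradNorm f (Hmul x z) ≤ M) :
    |f (Hmul x (horizWord l)) - f x| ≤ horizLength l * M := by
  induction l with
  | nil => simp [horizWord, Hmul_zero]
  | cons g l ih =>
    have hlen : horizLength l ≤ horizLength (g :: l) := by
      rw [horizLength_cons]; linarith [abs_nonneg g.1, abs_nonneg g.2]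
    have hlast : |f (Hmul x (horizWord (g :: l))) - f (Hmul x (horizWord l))|
        ≤ (|g.1| + |g.2|) * M := by
      rw [horizWord, ← Hmul_assoc]
      refine abs_sub_le_of_horizGradNorm_le_segment hf _ _ _ M fun t ht => ?_
      rw [Hmul_assoc]
      refine hM _ ((Hnorm_horizWord_le ((t * g.1, t * g.2) :: l)).trans ?_)
      have ht' : |t| ≤ 1 := abs_le.mpr ⟨by linarith [ht.1], ht.2⟩
      simp only [horizLength_cons, abs_mul]
      gcongr <;> exact mul_le_of_le_one_left (abs_nonneg _) ht'
    have hrest := ih fun z hz => hM z (hz.trans (by linarith))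
    calc |f (Hmul x (horizWord (g :: l))) - f x|
        ≤ |f (Hmul x (horizWord (g :: l))) - f (Hmul x (horizWord l))|
          + |f (Hmul x (horizWord l)) - f x| := abs_sub_le _ _ _
      _ ≤ horizLength (g :: l) * M := by rw [horizLength_cons]; linarith

lemma exists_mul_eq_abs_eq_sqrt (s : ℝ) :
    ∃ α β : ℝ, α * β = s ∧ |α| = √|s| ∧ |β| = √|s| := by
  rcases le_total 0 s with hs | hs
  · refine ⟨√s, √s, Real.mul_self_sqrt hs, ?_, ?_⟩ <;>
      rw [abs_of_nonneg hs, abs_of_nonneg (Real.sqrt_nonneg s)]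
  · have hs' := Real.mul_self_sqrt (neg_nonneg.mpr hs)
    refine ⟨√(-s), -√(-s), by linarith, ?_, ?_⟩ <;> rw [abs_of_nonpos hs] <;> simp

lemma exists_horizWord_eq (w : H3) : ∃ l, horizWord l = w ∧ horizLength l ≤ 6 * Hnorm w := by
  have ha := abs_fst_le_Hnorm w
  have hb := abs_snd_fst_le_Hnorm w
  have hc := abs_snd_snd_le_Hnorm_sq w
  obtain ⟨α, β, hαβ, hα, hβ⟩ :=
    exists_mul_eq_abs_eq_sqrt (-(w.2.2 + 2 * (w.1 * w.2.1)) / 4)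
  have hsqrt : √|-(w.2.2 + 2 * (w.1 * w.2.1)) / 4| ≤ Hnorm w := by
    rw [Real.sqrt_le_left (Hnorm_nonneg w), abs_div, abs_neg, Nat.abs_ofNat]
    have : |w.2.2 + 2 * (w.1 * w.2.1)| ≤ |w.2.2| + 2 * (|w.1| * |w.2.1|) := by
      simpa only [abs_mul, abs_two] using abs_add_le w.2.2 (2 * (w.1 * w.2.1))
    nlinarith [abs_nonneg w.1, abs_nonneg w.2.1]
  refine ⟨[(0, -β), (-α, 0), (0, β), (α, 0), (0, w.2.1), (w.1, 0)], ?_, ?_⟩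
  · simp only [horizWord, Hmul, Prod.fst_zero, Prod.snd_zero]
    ext
    · simp only; ring
    · simp only; ring
    · simp only; linear_combination (-4) * hαβ
  · simp only [horizLength_cons, horizLength_nil, abs_zero, abs_neg]
    linarith

lemma abs_sub_le_of_horizGradNorm_le {f : H3 → ℝ} (hf : Differentiable ℝ f) (x y : H3)
    (M : ℝ) (hM : ∀ z, Hnorm z ≤ 12 * Hdist x y → horizGradNorm f (Hmul x z) ≤ M) :
    |f y - f x| ≤ 6 * Hdist x y * M := by
  have hd : 0 ≤ Hdist x y := Hnorm_nonneg _
  have hM₀ : 0 ≤ M := (Real.sqrt_nonneg _).trans (hM 0 (by simp [Hnorm, hd]))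
  obtain ⟨l, hl, hlen⟩ := exists_horizWord_eq (Hmul (Hinv x) y)
  have hpath := abs_sub_le_of_horizGradNorm_le_horizWord hf x M l fun z hz =>
    hM z (hz.trans (by rw [Hdist]; linarith))
  rw [hl, Hmul_Hinv_mul] at hpath
  exact hpath.trans (by gcongr; exact hlen)

/-- Lipschitz-type estimate: there exist `C, γ₂ > 0` such that for every
`C¹` function `f` and all `x, y`,
`|f(y) − f(x)| ≤ C·δ(x,y)·sup{ |∇_ℍ f(x∗z)| : ‖z‖ ≤ γ₂·δ(x,y) }`. -/
theorem heisenberg_lipschitz_estimate :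
    ∃ C : ℝ, 0 < C ∧ ∃ γ₂ : ℝ, 0 < γ₂ ∧
      ∀ f : H3 → ℝ, ContDiff ℝ 1 f → ∀ x y : H3,
        |f y - f x| ≤ C * Hdist x y *
          sSup {v : ℝ | ∃ z : H3, Hnorm z ≤ γ₂ * Hdist x y ∧
            v = Real.sqrt (XD f (Hmul x z) ^ 2 + YD f (Hmul x z) ^ 2)} := by
  refine ⟨6, by norm_num, 12, by norm_num, fun f hf x y => ?_⟩
  have hcont : Continuous fun z => horizGradNorm f (Hmul x z) :=
    (continuous_horizGradNorm hf).comp (by unfold Hmul; fun_prop)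
  have hbdd : BddAbove {v : ℝ | ∃ z : H3, Hnorm z ≤ 12 * Hdist x y ∧
      v = horizGradNorm f (Hmul x z)} :=
    ((isCompact_Hnorm_le _).image hcont).bddAbove.mono <| by
      rintro _ ⟨z, hz, rfl⟩
      exact ⟨z, hz, rfl⟩
  exact abs_sub_le_of_horizGradNorm_le (hf.differentiable one_ne_zero) x y _
    fun z hz => le_csSup hbdd ⟨z, hz, rfl⟩
end
end

section
/- For every r₀ > 0 there exists a constant C > 0 such that for all z ∈ ℝ³, the sum over the lattice Σ_{k∈ℤ³} exp(−δ(k,z)/r₀) is at most C. -/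
noncomputable section

open MeasureTheory

/-! The gauge norm dominates `|p|`, `|q|` and `√|r|`, hence also `(√|p| + √|q| + √|r| - 2) / 3`.
Since `k⁻¹ ∗ z = (z₁ - k₁, z₂ - k₂, z₃ + 2 (k₁ z₂ - k₂ z₁) - k₃)`, each term of the lattice sum is
bounded by a product of three factors `exp (-√|t - n| / c)`, where only the last `t` depends on the
other indices, through `k₁` and `k₂`. A sum `∑ₙ exp (-√|t - n| / c)` is bounded uniformly in `t`
by shifting `n` by `⌊t⌋`, so summing over `k₃`, then `k₂`, then `k₁` bounds the whole sum. -/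

open Filter

def sqrtDecay (c s : ℝ) : ℝ := Real.exp (-√|s| / c)

lemma sqrtDecay_pos (c s : ℝ) : 0 < sqrtDecay c s := Real.exp_pos _

lemma summable_sqrtDecay_int {c : ℝ} (hc : 0 < c) : Summable fun n : ℤ => sqrtDecay c n := by
  have hsqrt : Tendsto (fun n : ℤ => √|(n : ℝ)|) cofinite atTop := by
    simpa only [Function.comp_def, Real.norm_eq_abs] using
      Real.tendsto_sqrt_atTop.comp (tendsto_norm_cocompact_atTop.comp Int.tendsto_coe_cofinite)
  refine summable_of_isBigO (Real.summable_abs_int_rpow one_lt_two) ?_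
  refine ((isLittleO_exp_neg_mul_rpow_atTop (inv_pos.2 hc) (-4)).isBigO.comp_tendsto hsqrt).congr'
    (Eventually.of_forall fun n => ?_) (Eventually.of_forall fun n => ?_)
  · simp only [Function.comp, sqrtDecay, neg_mul, neg_div, inv_mul_eq_div]
  · simp only [Function.comp, Real.sqrt_eq_rpow, ← Real.rpow_mul (abs_nonneg _)]
    norm_num

lemma sqrt_add_one_le_sqrt_add_one {a : ℝ} (ha : 0 ≤ a) : √(a + 1) ≤ √a + 1 :=
  (Real.sqrt_le_left (by positivity)).2 (by nlinarith [Real.sq_sqrt ha, Real.sqrt_nonneg a])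

lemma sqrt_le_add_one {a : ℝ} (ha : 0 ≤ a) : √a ≤ a + 1 :=
  (Real.sqrt_le_left (by positivity)).2 (by nlinarith)

lemma sqrtDecay_sub_le {c : ℝ} (hc : 0 < c) (t : ℝ) (n : ℤ) :
    sqrtDecay c (t - n) ≤ Real.exp (1 / c) * sqrtDecay c ((n - ⌊t⌋ : ℤ) : ℝ) := by
  have hdist : |((n - ⌊t⌋ : ℤ) : ℝ)| ≤ |t - n| + 1 := by
    have hfract : |t - ⌊t⌋| < 1 := by
      rw [Int.self_sub_floor, abs_of_nonneg (Int.fract_nonneg t)]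
      exact Int.fract_lt_one t
    push_cast
    linarith [abs_sub_le (n : ℝ) t ⌊t⌋, abs_sub_comm (n : ℝ) t]
  have hsqrt : √|((n - ⌊t⌋ : ℤ) : ℝ)| ≤ √|t - n| + 1 :=
    (Real.sqrt_le_sqrt hdist).trans (sqrt_add_one_le_sqrt_add_one (abs_nonneg _))
  rw [sqrtDecay, sqrtDecay, ← Real.exp_add, Real.exp_le_exp, ← add_div]
  gcongr
  linarith

lemma summable_sqrtDecay_sub {c : ℝ} (hc : 0 < c) (t : ℝ) :
    Summable fun n : ℤ => sqrtDecay c (t - n) :=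
  (((Equiv.subRight ⌊t⌋).summable_iff.2 (summable_sqrtDecay_int hc)).mul_left _).of_nonneg_of_le
    (fun _ => (sqrtDecay_pos _ _).le) (sqrtDecay_sub_le hc t)

lemma tsum_sqrtDecay_sub_le {c : ℝ} (hc : 0 < c) (t : ℝ) :
    ∑' n : ℤ, sqrtDecay c (t - n) ≤ Real.exp (1 / c) * ∑' n : ℤ, sqrtDecay c n := by
  have hshift := (Equiv.subRight ⌊t⌋).summable_iff.2 (summable_sqrtDecay_int hc)
  calc ∑' n : ℤ, sqrtDecay c (t - n)
      ≤ ∑' n : ℤ, Real.exp (1 / c) * sqrtDecay c ((n - ⌊t⌋ : ℤ) : ℝ) :=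
        (summable_sqrtDecay_sub hc t).tsum_le_tsum (sqrtDecay_sub_le hc t) (hshift.mul_left _)
    _ = Real.exp (1 / c) * ∑' n : ℤ, sqrtDecay c n := by
        rw [tsum_mul_left, ← (Equiv.subRight ⌊t⌋).tsum_eq (fun n : ℤ => sqrtDecay c n)]
        rfl

lemma summable_and_tsum_prod_le {α β : Type*} {f : α × β → ℝ} {g : α → ℝ} {h : α → β → ℝ}
    {G H : ℝ} (hf : 0 ≤ f) (hg : 0 ≤ g) (hH : 0 ≤ H) (hfgh : ∀ a b, f (a, b) ≤ g a * h a b)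
    (hgs : Summable g) (hgG : ∑' a, g a ≤ G) (hhs : ∀ a, Summable (h a))
    (hhH : ∀ a, ∑' b, h a b ≤ H) :
    Summable f ∧ ∑' p, f p ≤ G * H := by
  have hfib (a : α) : Summable fun b => f (a, b) :=
    ((hhs a).mul_left (g a)).of_nonneg_of_le (fun b => hf _) (hfgh a)
  have hfib_le (a : α) : ∑' b, f (a, b) ≤ g a * H :=
    calc ∑' b, f (a, b) ≤ ∑' b, g a * h a b :=
          (hfib a).tsum_le_tsum (hfgh a) ((hhs a).mul_left _)
      _ = g a * ∑' b, h a b := tsum_mul_left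
      _ ≤ g a * H := mul_le_mul_of_nonneg_left (hhH a) (hg a)
  have hmarg : Summable fun a => ∑' b, f (a, b) :=
    (hgs.mul_right H).of_nonneg_of_le (fun a => tsum_nonneg fun b => hf _) hfib_le
  have hsum : Summable f := (summable_prod_of_nonneg hf).2 ⟨hfib, hmarg⟩
  refine ⟨hsum, ?_⟩
  calc ∑' p, f p = ∑' a, ∑' b, f (a, b) := hsum.tsum_prod' hfib
    _ ≤ ∑' a, g a * H := hmarg.tsum_le_tsum hfib_le (hgs.mul_right H)
    _ = (∑' a, g a) * H := tsum_mul_right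
    _ ≤ G * H := mul_le_mul_of_nonneg_right hgG hH

lemma le_hnorm_of_pow_four_le {x : H3} {s : ℝ} (hs : 0 ≤ s)
    (h : s ^ 4 ≤ (x.1 ^ 2 + x.2.1 ^ 2) ^ 2 + x.2.2 ^ 2) : s ≤ Hnorm x :=
  calc s = (s ^ 4) ^ ((1 : ℝ) / 4) := by
        rw [one_div]; exact_mod_cast (Real.pow_rpow_inv_natCast hs four_ne_zero).symm
    _ ≤ Hnorm x := Real.rpow_le_rpow (by positivity) h (by norm_num)

lemma abs_fst_le_hnorm (x : H3) : |x.1| ≤ Hnorm x :=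
  le_hnorm_of_pow_four_le (abs_nonneg _) <| by
    rw [pow_abs, abs_of_nonneg (by positivity)]
    nlinarith [sq_nonneg x.1, sq_nonneg x.2.1, sq_nonneg x.2.2]

lemma abs_snd_fst_le_hnorm (x : H3) : |x.2.1| ≤ Hnorm x :=
  le_hnorm_of_pow_four_le (abs_nonneg _) <| by
    rw [pow_abs, abs_of_nonneg (by positivity)]
    nlinarith [sq_nonneg x.1, sq_nonneg x.2.1, sq_nonneg x.2.2]

lemma sqrt_abs_snd_snd_le_hnorm (x : H3) : √|x.2.2| ≤ Hnorm x :=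
  le_hnorm_of_pow_four_le (Real.sqrt_nonneg _) <| by
    rw [show (4 : ℕ) = 2 * 2 from rfl, pow_mul, Real.sq_sqrt (abs_nonneg _), sq_abs]
    nlinarith [sq_nonneg (x.1 ^ 2 + x.2.1 ^ 2)]

lemma exp_neg_hnorm_div_le {r : ℝ} (hr : 0 < r) (x : H3) :
    Real.exp (-Hnorm x / r) ≤ Real.exp (2 / (3 * r)) *
      (sqrtDecay (3 * r) x.1 * (sqrtDecay (3 * r) x.2.1 * sqrtDecay (3 * r) x.2.2)) := by
  have hsum : √|x.1| + √|x.2.1| + √|x.2.2| ≤ 3 * Hnorm x + 2 := by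
    linarith [abs_fst_le_hnorm x, abs_snd_fst_le_hnorm x, sqrt_abs_snd_snd_le_hnorm x,
      sqrt_le_add_one (abs_nonneg x.1), sqrt_le_add_one (abs_nonneg x.2.1)]
  simp only [sqrtDecay, ← Real.exp_add, Real.exp_le_exp]
  rw [div_le_iff₀ hr]
  field_simp
  linarith

lemma hmul_hinv_latticePt (k : ℤ × ℤ × ℤ) (z : H3) :
    Hmul (Hinv (latticePt k)) z =
      (z.1 - k.1, z.2.1 - k.2.1, z.2.2 + 2 * (k.1 * z.2.1 - k.2.1 * z.1) - k.2.2) := by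
  simp only [Hmul, Hinv, latticePt, Prod.mk.injEq]
  exact ⟨by ring, by ring, by ring⟩

/-- For every `r₀ > 0` there is `C > 0` such that for all `z ∈ ℝ³`,
`Σ_{k∈ℤ³} exp(−δ(k,z)/r₀) ≤ C`. -/
theorem heisenberg_lattice_exponential_sum (r₀ : ℝ) (hr₀ : 0 < r₀) :
    ∃ C : ℝ, 0 < C ∧ ∀ z : H3,
      Summable (fun k : ℤ × ℤ × ℤ => Real.exp (-Hdist (latticePt k) z / r₀)) ∧
      ∑' k : ℤ × ℤ × ℤ, Real.exp (-Hdist (latticePt k) z / r₀) ≤ C := by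
  set c := 3 * r₀
  have hc : 0 < c := by positivity
  set B := Real.exp (1 / c) * ∑' n : ℤ, sqrtDecay c n
  have hB : 0 < B := mul_pos (Real.exp_pos _) <|
    (summable_sqrtDecay_int hc).tsum_pos (fun _ => (sqrtDecay_pos _ _).le) 0 (sqrtDecay_pos _ _)
  have hdecay_nonneg (s : ℝ) : 0 ≤ sqrtDecay c s := (sqrtDecay_pos _ _).le
  refine ⟨Real.exp (2 / c) * B * (B * B), by positivity, fun z => ?_⟩
  set T : ℤ → ℤ → ℝ := fun k₁ k₂ => z.2.2 + 2 * (k₁ * z.2.1 - k₂ * z.1)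
  have hinner (k₁ : ℤ) := summable_and_tsum_prod_le
    (f := fun p : ℤ × ℤ => sqrtDecay c (z.2.1 - p.1) * sqrtDecay c (T k₁ p.1 - p.2))
    (fun _ => mul_nonneg (hdecay_nonneg _) (hdecay_nonneg _)) (fun _ => hdecay_nonneg _) hB.le
    (fun _ _ => le_rfl) (summable_sqrtDecay_sub hc _) (tsum_sqrtDecay_sub_le hc _)
    (fun _ => summable_sqrtDecay_sub hc _) (fun _ => tsum_sqrtDecay_sub_le hc _)
  refine summable_and_tsum_prod_le (g := fun k₁ : ℤ => Real.exp (2 / c) * sqrtDecay c (z.1 - k₁))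
    (fun _ => (Real.exp_pos _).le) (fun _ => mul_nonneg (Real.exp_pos _).le (hdecay_nonneg _))
    (by positivity) (fun k₁ p => ?_) ((summable_sqrtDecay_sub hc _).mul_left _) ?_
    (fun k₁ => (hinner k₁).1) (fun k₁ => (hinner k₁).2)
  · rw [Hdist, hmul_hinv_latticePt]
    exact (exp_neg_hnorm_div_le hr₀ _).trans_eq (by ring)
  · rw [tsum_mul_left]
    exact mul_le_mul_of_nonneg_left (tsum_sqrtDecay_sub_le hc _) (Real.exp_pos _).le

end
end
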